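/- Let A, B : I^n → I be standardized functions with A ≤ B and fix an integer k with 1 ≤ k ≤ n. Suppose at least one of the functions A and B satisfies Condition S with some countable set S ⊆ [0,1]. Then the following are equivalent: (i) there exists a k-increasing function C : I^n → I such that A ≤ C ≤ B; (ii) L_k^{(A,B)}(DU) ≥ 0 for all DU ∈ R_k(I^n). -/

import Mathlib

open scoped Classical BigOperators

namespace KIncr

/-- Points of the ambient space `ℝ^n`. -/
abbrev Pt (n : ℕ) := Fin n → ℝ

/-- Membership in the unit cube `I^n = [0,1]^n`. -/
def inCube {n : ℕ} (x : Pt n) : Prop := ∀ i, x i ∈ Set.Icc (0:ℝ) 1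

/-- The unit cube as a set. -/
def cubeSet (n : ℕ) : Set (Pt n) := {x | inCube x}

/-- Vertices of the unit cube `I^n`. -/
def isCubeVertex {n : ℕ} (x : Pt n) : Prop := ∀ i, x i = 0 ∨ x i = 1

/-- A (formal) box, given by its lower-left and upper-right corners. -/
structure Box (n : ℕ) where
  lo : Pt n
  hi : Pt n

/-- `R` is a `k`-box in `I^n`: exactly `k` coordinates are nondegenerate. -/
def Box.IsKBox {n : ℕ} (k : ℕ) (R : Box n) : Prop :=
  inCube R.lo ∧ inCube R.hi ∧ (∀ i, R.lo i ≤ R.hi i) ∧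
    (Finset.univ.filter (fun i => R.lo i < R.hi i)).card = k

/-- `v` is a vertex of the box `R`. -/
def Box.IsVertex {n : ℕ} (R : Box n) (v : Pt n) : Prop :=
  ∀ i, v i = R.lo i ∨ v i = R.hi i

/-- The (finite) set of vertices of a box. -/
noncomputable def Box.vertices {n : ℕ} (R : Box n) : Finset (Pt n) :=
  Finset.image (fun ε : Fin n → Bool => fun i => if ε i then R.hi i else R.lo i)
    Finset.univ

/-- The sign `(-1)^(m-(n-k))` of a vertex `v` of a `k`-box, where
`m = #{i : v i = lo i}`;  since `m ≥ n - k`, this equals `(-1)^(m+(n-k))`. -/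
noncomputable def Box.sign {n : ℕ} (k : ℕ) (R : Box n) (v : Pt n) : ℤ :=
  (-1) ^ ((Finset.univ.filter (fun i => v i = R.lo i)).card + (n - k))

/-- The multiplicity `m_R(u)` of a point `u` with respect to a `k`-box `R`. -/
noncomputable def Box.mult {n : ℕ} (k : ℕ) (R : Box n) (u : Pt n) : ℤ :=
  if R.IsVertex u then R.sign k u else 0

/-- `V_{A,k}(R) = ∑_{v ∈ ver R} sign_R(v) · A(v)`. -/
noncomputable def Vvol {n : ℕ} (k : ℕ) (A : Pt n → ℝ) (R : Box n) : ℝ :=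
  ∑ v ∈ R.vertices, (R.sign k v : ℝ) * A v

/-- A function is `k`-increasing on `D` if `V_{A,k}(R) ≥ 0` for every `k`-box
with all vertices in `D`. -/
def KIncreasingOn {n : ℕ} (k : ℕ) (D : Set (Pt n)) (A : Pt n → ℝ) : Prop :=
  ∀ R : Box n, R.IsKBox k → (∀ v ∈ R.vertices, v ∈ D) → 0 ≤ Vvol k A R

/-- The multiplicity `m_DU(u)` of a point with respect to a formal (multiset)
disjoint union of `k`-boxes. -/
noncomputable def multDU {n : ℕ} (k : ℕ) (DU : Multiset (Box n)) (u : Pt n) : ℤ :=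
  (DU.map (fun R => R.mult k u)).sum

/-- `DU ∈ R_k(D)`: every box of the multiset `DU` is a `k`-box with all its
vertices in `D`. -/
def memRk {n : ℕ} (k : ℕ) (D : Set (Pt n)) (DU : Multiset (Box n)) : Prop :=
  ∀ R ∈ DU, R.IsKBox k ∧ ∀ v ∈ R.vertices, v ∈ D

/-- `L_k^{(A,B)}(DU) = ∑_{m_DU(u)>0} m_DU(u)·B(u) + ∑_{m_DU(u)<0} m_DU(u)·A(u)`. -/
noncomputable def Lk {n : ℕ} (k : ℕ) (A B : Pt n → ℝ) (DU : Multiset (Box n)) : ℝ :=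
  ∑ u ∈ DU.toFinset.biUnion Box.vertices,
    (if 0 < multDU k DU u then (multDU k DU u : ℝ) * B u
     else if multDU k DU u < 0 then (multDU k DU u : ℝ) * A u else 0)

/-- `P⁻_{k,D}^{(A,B)}(x)`, with the Mathlib convention `sInf ∅ = 0`. -/
noncomputable def Pneg {n : ℕ} (k : ℕ) (D : Set (Pt n)) (A B : Pt n → ℝ) (x : Pt n) : ℝ :=
  sInf {r : ℝ | ∃ DU : Multiset (Box n), memRk k D DU ∧ multDU k DU x < 0 ∧
    r = Lk k A B DU / |(multDU k DU x : ℝ)|}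

/-- `P⁺_{k,D}^{(A,B)}(x)`, with the Mathlib convention `sInf ∅ = 0`. -/
noncomputable def Ppos {n : ℕ} (k : ℕ) (D : Set (Pt n)) (A B : Pt n → ℝ) (x : Pt n) : ℝ :=
  sInf {r : ℝ | ∃ DU : Multiset (Box n), memRk k D DU ∧ 0 < multDU k DU x ∧
    r = Lk k A B DU / |(multDU k DU x : ℝ)|}

/-- `γ_{k,D}^{(A,B)}(x) = min {P⁻_{k,D}^{(A,B)}(x), B(x) - A(x)}`. -/
noncomputable def gammaK {n : ℕ} (k : ℕ) (D : Set (Pt n)) (A B : Pt n → ℝ) (x : Pt n) : ℝ :=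
  min (Pneg k D A B x) (B x - A x)

/-- `δ_{k,D}^{(A,B)}(x) = min {P⁺_{k,D}^{(A,B)}(x), B(x) - A(x)}`. -/
noncomputable def deltaK {n : ℕ} (k : ℕ) (D : Set (Pt n)) (A B : Pt n → ℝ) (x : Pt n) : ℝ :=
  min (Ppos k D A B x) (B x - A x)

/-- A dense countably infinite mesh `D = ∏ δᵢ` in `I^n`. -/
def IsMesh {n : ℕ} (D : Set (Pt n)) : Prop :=
  ∃ δ : Fin n → Set ℝ,
    (∀ i, δ i ⊆ Set.Icc (0:ℝ) 1 ∧ (δ i).Countable ∧ (δ i).Infinite ∧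
      Set.Icc (0:ℝ) 1 ⊆ closure (δ i) ∧ (0:ℝ) ∈ δ i ∧ (1:ℝ) ∈ δ i) ∧
    D = {x : Pt n | ∀ i, x i ∈ δ i}

/-- `A` is grounded: it vanishes whenever some coordinate is `0`. -/
def Grounded {n : ℕ} (A : Pt n → ℝ) : Prop :=
  ∀ x : Pt n, inCube x → (∃ i, x i = 0) → A x = 0

/-- `A` is 1-increasing (increasing in each variable). -/
def OneIncreasing {n : ℕ} (A : Pt n → ℝ) : Prop :=
  ∀ x y : Pt n, inCube x → inCube y → (∀ i, x i ≤ y i) → A x ≤ A y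

/-- `A` has uniform marginals. -/
def UniformMarginals {n : ℕ} (A : Pt n → ℝ) : Prop :=
  ∀ i : Fin n, ∀ t ∈ Set.Icc (0:ℝ) 1, A (Function.update (fun _ => (1:ℝ)) i t) = t

/-- `A` is a standardized function. -/
def Standardized {n : ℕ} (A : Pt n → ℝ) : Prop :=
  Grounded A ∧ OneIncreasing A ∧ A (fun _ => (1:ℝ)) = 1

/-- `A` is a semicopula. -/
def Semicopula {n : ℕ} (A : Pt n → ℝ) : Prop :=
  Grounded A ∧ OneIncreasing A ∧ UniformMarginals A

/-- `A` maps the unit cube into `I = [0,1]`. -/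
def MapsToI {n : ℕ} (A : Pt n → ℝ) : Prop :=
  ∀ x : Pt n, inCube x → A x ∈ Set.Icc (0:ℝ) 1

/-- Condition S: all discontinuities of all sections of `A` lie in the
countable set `S`. -/
def CondS {n : ℕ} (A : Pt n → ℝ) (S : Set ℝ) : Prop :=
  ∀ u : Pt n, inCube u → ∀ i : Fin n, ∀ t ∈ Set.Icc (0:ℝ) 1, t ∉ S →
    ContinuousWithinAt (fun s => A (Function.update u i s)) (Set.Icc (0:ℝ) 1) t

/-- A quasi-copula: a semicopula that is 1-Lipschitz w.r.t. the ℓ¹-norm. -/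
def QuasiCopula {n : ℕ} (A : Pt n → ℝ) : Prop :=
  Semicopula A ∧ ∀ x y : Pt n, inCube x → inCube y → |A x - A y| ≤ ∑ i, |x i - y i|

end KIncr

/-!
`L_k^{(A,B)}(DU)` is the maximum of `∑_u m_DU(u) C(u) = ∑_{R ∈ DU} V_{C,k}(R)` over all
`A ≤ C ≤ B`, so it is nonnegative as soon as one such `C` is `k`-increasing.

For the converse, consider the compact convex set `K` of functions `C` with `A ≤ C ≤ B` on
`I^n` (and `C = 0` outside). Each condition `V_{C,k}(R) ≥ 0` cuts out a closed subset of `K`,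
so by compactness it suffices to satisfy finitely many of them, for boxes `R₁, …, R_m`.
If that is impossible, the image of `K` under `C ↦ (V_{C,k}(R_j))_j` misses the nonnegative
orthant of `ℝ^m`, and a separating hyperplane gives weights `λ_j ≥ 0` with
`∑ λ_j V_{C,k}(R_j) < u < 0` on `K`. Rounding `d λ_j` up for a large `d` gives natural
multiplicities `N_j` with `∑ N_j V_{C,k}(R_j) < 0` on `K`; since `L_k^{(A,B)}` of the formal union
`∑ N_j R_j` is the value at the maximizing `C ∈ K`, it is negative.
-/

namespace KIncr

variable {n k : ℕ}

lemma Box.mem_vertices {R : Box n} {u : Pt n} : u ∈ R.vertices ↔ R.IsVertex u := by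
  constructor
  · rintro hu i
    obtain ⟨ε, -, rfl⟩ := Finset.mem_image.1 hu
    by_cases h : ε i <;> simp [h]
  · intro hu
    refine Finset.mem_image.2 ⟨fun i => decide (u i = R.hi i), Finset.mem_univ _, ?_⟩
    funext i
    by_cases h : u i = R.hi i
    · simp [h]
    · grind [(hu i).resolve_right h]

lemma Box.card_vertices_le (R : Box n) : R.vertices.card ≤ 2 ^ n :=
  Finset.card_image_le.trans (by simp)

lemma Box.IsKBox.inCube_of_mem_vertices {R : Box n} (hR : R.IsKBox k) {v : Pt n}
    (hv : v ∈ R.vertices) : inCube v := fun i => by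
  rcases Box.mem_vertices.1 hv i with h | h
  · exact h ▸ hR.1 i
  · exact h ▸ hR.2.1 i

lemma Box.mult_of_mem {R : Box n} {u : Pt n} (h : u ∈ R.vertices) :
    R.mult k u = R.sign k u :=
  if_pos (Box.mem_vertices.1 h)

lemma Box.mult_of_notMem {R : Box n} {u : Pt n} (h : u ∉ R.vertices) : R.mult k u = 0 :=
  if_neg (mt Box.mem_vertices.2 h)

lemma Box.abs_sign (R : Box n) (u : Pt n) : |(R.sign k u : ℝ)| = 1 := by
  simp [Box.sign]

lemma Box.sum_mult_mul {R : Box n} {T : Finset (Pt n)} (hT : R.vertices ⊆ T)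
    (f : Pt n → ℝ) : ∑ u ∈ T, (R.mult k u : ℝ) * f u = Vvol k f R := by
  rw [Vvol, ← Finset.sum_subset hT fun u _ hu => by simp [Box.mult_of_notMem hu]]
  exact Finset.sum_congr rfl fun u hu => by rw [Box.mult_of_mem hu]

lemma abs_Vvol_le {R : Box n} {C : Pt n → ℝ} (hC : ∀ v ∈ R.vertices, |C v| ≤ 1) :
    |Vvol k C R| ≤ 2 ^ n :=
  calc |Vvol k C R| ≤ ∑ v ∈ R.vertices, |(R.sign k v : ℝ) * C v| :=
        Finset.abs_sum_le_sum_abs _ _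
    _ ≤ ∑ _v ∈ R.vertices, (1 : ℝ) :=
        Finset.sum_le_sum fun v hv => by rw [abs_mul, Box.abs_sign, one_mul]; exact hC v hv
    _ ≤ 2 ^ n := by simpa using (Nat.cast_le (α := ℝ)).2 R.card_vertices_le

noncomputable def VvolCLM (k : ℕ) (R : Box n) : (Pt n → ℝ) →L[ℝ] ℝ :=
  ∑ v ∈ R.vertices, (R.sign k v : ℝ) • ContinuousLinearMap.proj v

@[simp]
lemma VvolCLM_apply (R : Box n) (C : Pt n → ℝ) : VvolCLM k R C = Vvol k C R := by
  simp [VvolCLM, Vvol]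

lemma multDU_cons (R : Box n) (DU : Multiset (Box n)) (u : Pt n) :
    multDU k (R ::ₘ DU) u = R.mult k u + multDU k DU u := by
  simp [multDU]

lemma sum_multDU_mul {DU : Multiset (Box n)} {T : Finset (Pt n)}
    (hT : ∀ R ∈ DU, R.vertices ⊆ T) (f : Pt n → ℝ) :
    ∑ u ∈ T, (multDU k DU u : ℝ) * f u = (DU.map (Vvol k f)).sum := by
  induction DU using Multiset.induction with
  | empty => simp [multDU]
  | cons R DU ih =>
    simp only [multDU_cons, Int.cast_add, add_mul, Finset.sum_add_distrib, Multiset.map_cons,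
      Multiset.sum_cons]
    rw [ih fun R' h => hT R' (Multiset.mem_cons_of_mem h),
      Box.sum_mult_mul (hT R (Multiset.mem_cons_self R DU))]

lemma Lk_eq_sum {A B : Pt n → ℝ} (DU : Multiset (Box n)) :
    Lk k A B DU = ∑ u ∈ DU.toFinset.biUnion Box.vertices,
      (multDU k DU u : ℝ) * (if 0 < multDU k DU u then B u else A u) := by
  refine Finset.sum_congr rfl fun u _ => ?_
  rcases lt_trichotomy (multDU k DU u) 0 with h | h | h
  · simp [h, h.not_gt]
  · simp [h]
  · simp [h]

lemma sum_Vvol_eq_sum_multDU_mul (DU : Multiset (Box n)) (f : Pt n → ℝ) :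
    (DU.map (Vvol k f)).sum = ∑ u ∈ DU.toFinset.biUnion Box.vertices, (multDU k DU u : ℝ) * f u :=
  (sum_multDU_mul (fun _ hR _ hv => Finset.mem_biUnion.2 ⟨_, Multiset.mem_toFinset.2 hR, hv⟩)
    f).symm

section Sandwich

variable {A B : Pt n → ℝ}

lemma inCube_of_memRk {DU : Multiset (Box n)} (hDU : memRk k (cubeSet n) DU) {u : Pt n}
    (hu : u ∈ DU.toFinset.biUnion Box.vertices) : inCube u := by
  obtain ⟨R, hR, hv⟩ := Finset.mem_biUnion.1 hu
  exact (hDU R (Multiset.mem_toFinset.1 hR)).2 u hv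

lemma sum_Vvol_le_Lk {C : Pt n → ℝ} {DU : Multiset (Box n)} (hDU : memRk k (cubeSet n) DU)
    (hC : ∀ x, inCube x → A x ≤ C x ∧ C x ≤ B x) :
    (DU.map (Vvol k C)).sum ≤ Lk k A B DU := by
  rw [sum_Vvol_eq_sum_multDU_mul, Lk_eq_sum]
  refine Finset.sum_le_sum fun u hu => ?_
  obtain ⟨hAC, hCB⟩ := hC u (inCube_of_memRk hDU hu)
  split_ifs with h
  · exact mul_le_mul_of_nonneg_left hCB (by exact_mod_cast h.le)
  · exact mul_le_mul_of_nonpos_left hAC (by exact_mod_cast not_lt.1 h)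

lemma exists_mem_Icc_sum_Vvol_eq_Lk (hAB : ∀ x, inCube x → A x ≤ B x) (DU : Multiset (Box n))
    (hDU : memRk k (cubeSet n) DU) :
    ∃ C ∈ Set.Icc ((cubeSet n).indicator A) ((cubeSet n).indicator B),
      (DU.map (Vvol k C)).sum = Lk k A B DU := by
  refine ⟨(cubeSet n).indicator fun u => if 0 < multDU k DU u then B u else A u,
    ⟨fun x => Set.indicator_le_indicator' fun hx => ?_,
      fun x => Set.indicator_le_indicator' fun hx => ?_⟩, ?_⟩
  · split_ifs <;> simp [hAB x hx]
  · split_ifs <;> simp [hAB x hx]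
  · rw [sum_Vvol_eq_sum_multDU_mul, Lk_eq_sum]
    exact Finset.sum_congr rfl fun u hu => by
      rw [Set.indicator_of_mem (show u ∈ cubeSet n from inCube_of_memRk hDU hu)]

lemma between_of_mem_Icc_indicator {C : Pt n → ℝ}
    (hC : C ∈ Set.Icc ((cubeSet n).indicator A) ((cubeSet n).indicator B)) {x : Pt n}
    (hx : inCube x) : A x ≤ C x ∧ C x ≤ B x := by
  have hx' : x ∈ cubeSet n := hx
  simpa [Set.indicator_of_mem hx'] using And.intro (hC.1 x) (hC.2 x)

lemma MapsToI.of_mem_Icc_indicator (hAI : MapsToI A) (hBI : MapsToI B) {C : Pt n → ℝ}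
    (hC : C ∈ Set.Icc ((cubeSet n).indicator A) ((cubeSet n).indicator B)) : MapsToI C :=
  fun x hx => ⟨(hAI x hx).1.trans (between_of_mem_Icc_indicator hC hx).1,
    (between_of_mem_Icc_indicator hC hx).2.trans (hBI x hx).2⟩

end Sandwich

lemma exists_nonneg_weights_of_disjoint_Ici {ι : Type*} [Fintype ι] {P : Set (ι → ℝ)}
    (hPc : IsCompact P) (hPconv : Convex ℝ P) (hP : Disjoint P (Set.Ici 0)) :
    ∃ w : ι → ℝ, 0 ≤ w ∧ ∃ u < 0, ∀ y ∈ P, ∑ i, y i * w i < u := by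
  obtain ⟨f, u, v, hfP, huv, hfI⟩ :=
    geometric_hahn_banach_compact_closed hPconv hPc (convex_Ici 0) isClosed_Ici hP
  let e : ι → ι → ℝ := fun i j => if i = j then 1 else 0
  have hv : v < 0 := by simpa using hfI 0 Set.self_mem_Ici
  refine ⟨fun i => f (e i), fun i => ?_, u, huv.trans hv, fun y hy => ?_⟩
  · by_contra! hneg
    have hmem : (v / f (e i)) • e i ∈ Set.Ici 0 := fun j =>
      smul_nonneg (div_nonneg_of_nonpos hv.le hneg.le) (by positivity)
    have := hfI _ hmem
    rw [map_smul, smul_eq_mul, div_mul_cancel₀ _ hneg.ne] at this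
    exact lt_irrefl v this
  · calc ∑ i, y i * f (e i) = f y := (f.toLinearMap.pi_apply_eq_sum_univ y).symm
      _ < u := hfP y hy

lemma exists_nat_weights {ι : Type*} [Fintype ι] {X : Set (ι → ℝ)} {w : ι → ℝ} (hw : 0 ≤ w)
    {u b : ℝ} (hu : u < 0) (hX : ∀ x ∈ X, ∑ i, x i * w i < u) (hb : ∀ x ∈ X, ∀ i, |x i| ≤ b) :
    ∃ N : ι → ℕ, ∀ x ∈ X, ∑ i, (N i : ℝ) * x i < 0 := by
  set M : ℝ := Fintype.card ι * b
  set d : ℝ := (|M| + 1) / -u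
  have hd : 0 < d := div_pos (by positivity) (neg_pos.2 hu)
  refine ⟨fun i => ⌈w i * d⌉₊, fun x hx => ?_⟩
  have herr : ∀ i, ((⌈w i * d⌉₊ : ℝ) - w i * d) * x i ≤ b := fun i => by
    have h0 : 0 ≤ (⌈w i * d⌉₊ : ℝ) - w i * d := sub_nonneg.2 (Nat.le_ceil _)
    have h1 : (⌈w i * d⌉₊ : ℝ) - w i * d ≤ 1 :=
      by linarith [Nat.ceil_lt_add_one (mul_nonneg (hw i) hd.le)]
    calc _ ≤ ((⌈w i * d⌉₊ : ℝ) - w i * d) * |x i| := mul_le_mul_of_nonneg_left (le_abs_self _) h0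
      _ ≤ 1 * |x i| := mul_le_mul_of_nonneg_right h1 (abs_nonneg _)
      _ ≤ b := by rw [one_mul]; exact hb x hx i
  have hdu : d * u = -(|M| + 1) := by
    rw [div_mul_eq_mul_div, div_eq_iff (neg_ne_zero.2 hu.ne)]; ring
  calc ∑ i, (⌈w i * d⌉₊ : ℝ) * x i
      = ∑ i, ((⌈w i * d⌉₊ : ℝ) - w i * d) * x i + d * ∑ i, x i * w i := by
        rw [Finset.mul_sum, ← Finset.sum_add_distrib]
        exact Finset.sum_congr rfl fun i _ => by ring
    _ < M + d * u := by
        refine add_lt_add_of_le_of_lt ?_ (mul_lt_mul_of_pos_left (hX x hx) hd)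
        simpa [M] using Finset.sum_le_sum fun i (_ : i ∈ Finset.univ) => herr i
    _ < 0 := by rw [hdu]; linarith [le_abs_self M]

section Feasibility

variable {A B : Pt n → ℝ}

theorem exists_mem_Icc_forall_Vvol_nonneg {ι : Type*} [Fintype ι] (R : ι → Box n)
    (hR : ∀ i, (R i).IsKBox k) (hAI : MapsToI A) (hBI : MapsToI B)
    (hAB : ∀ x, inCube x → A x ≤ B x)
    (hL : ∀ DU : Multiset (Box n), memRk k (cubeSet n) DU → 0 ≤ Lk k A B DU) :
    ∃ C ∈ Set.Icc ((cubeSet n).indicator A) ((cubeSet n).indicator B),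
      ∀ i, 0 ≤ Vvol k C (R i) := by
  set K := Set.Icc ((cubeSet n).indicator A) ((cubeSet n).indicator B)
  by_contra! hK
  let Ψ : (Pt n → ℝ) →L[ℝ] (ι → ℝ) := ContinuousLinearMap.pi fun i => VvolCLM k (R i)
  have hdisj : Disjoint (Ψ '' K) (Set.Ici 0) := by
    refine Set.disjoint_left.2 ?_
    rintro _ ⟨C, hC, rfl⟩ hpos
    obtain ⟨i, hi⟩ := hK C hC
    exact hi.not_ge (by simpa [Ψ] using hpos i)
  obtain ⟨w, hw, u, hu, hwu⟩ := exists_nonneg_weights_of_disjoint_Ici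
    (isCompact_Icc.image Ψ.continuous) ((convex_Icc _ _).linear_image Ψ.toLinearMap) hdisj
  have hbound : ∀ y ∈ Ψ '' K, ∀ i, |y i| ≤ 2 ^ n := by
    rintro _ ⟨C, hC, rfl⟩ i
    have hCI := MapsToI.of_mem_Icc_indicator hAI hBI hC
    simpa [Ψ] using abs_Vvol_le fun v hv =>
      have hv01 := hCI v ((hR i).inCube_of_mem_vertices hv)
      abs_le.2 ⟨by linarith [hv01.1], hv01.2⟩
  obtain ⟨N, hN⟩ := exists_nat_weights hw hu hwu hbound
  set DU : Multiset (Box n) := Finset.univ.val.bind fun i => Multiset.replicate (N i) (R i)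
  have hDU : memRk k (cubeSet n) DU := by
    intro R' hR'
    obtain ⟨i, -, hi⟩ := Multiset.mem_bind.1 hR'
    rw [Multiset.eq_of_mem_replicate hi]
    exact ⟨hR i, fun v hv => (hR i).inCube_of_mem_vertices hv⟩
  obtain ⟨C, hC, hCL⟩ := exists_mem_Icc_sum_Vvol_eq_Lk hAB DU hDU
  have hsum : (DU.map (Vvol k C)).sum = ∑ i, (N i : ℝ) * Vvol k C (R i) := by
    simp only [DU, Multiset.map_bind, Multiset.sum_bind, Multiset.map_replicate,
      Multiset.sum_replicate, nsmul_eq_mul]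
    rfl
  have hneg := hN (Ψ C) ⟨C, hC, rfl⟩
  simp only [Ψ, ContinuousLinearMap.pi_apply, VvolCLM_apply] at hneg
  have := hL DU hDU
  rw [← hCL, hsum] at this
  linarith

theorem exists_kIncreasingOn_of_Lk_nonneg (hAI : MapsToI A) (hBI : MapsToI B)
    (hAB : ∀ x, inCube x → A x ≤ B x)
    (hL : ∀ DU : Multiset (Box n), memRk k (cubeSet n) DU → 0 ≤ Lk k A B DU) :
    ∃ C : Pt n → ℝ, MapsToI C ∧ KIncreasingOn k (cubeSet n) C ∧
      ∀ x, inCube x → A x ≤ C x ∧ C x ≤ B x := by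
  let t : {R : Box n // R.IsKBox k} → Set (Pt n → ℝ) := fun R => {C | 0 ≤ VvolCLM k R.1 C}
  obtain ⟨C, hC, hCt⟩ := isCompact_Icc.inter_iInter_nonempty t
    (fun R => isClosed_le continuous_const (VvolCLM k R.1).continuous) fun G => by
      obtain ⟨C, hC, hCG⟩ := exists_mem_Icc_forall_Vvol_nonneg (fun R : G => R.1.1)
        (fun R => R.1.2) hAI hBI hAB hL
      exact ⟨C, hC, Set.mem_iInter₂.2 fun R hR => by simpa [t] using hCG ⟨R, hR⟩⟩
  refine ⟨C, MapsToI.of_mem_Icc_indicator hAI hBI hC, fun R hR _ => ?_,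
    fun x hx => between_of_mem_Icc_indicator hC hx⟩
  simpa [t] using Set.mem_iInter.1 hCt ⟨R, hR⟩

end Feasibility

lemma Lk_nonneg_of_kIncreasingOn {A B C : Pt n → ℝ} (hC : KIncreasingOn k (cubeSet n) C)
    (hCAB : ∀ x, inCube x → A x ≤ C x ∧ C x ≤ B x) {DU : Multiset (Box n)}
    (hDU : memRk k (cubeSet n) DU) : 0 ≤ Lk k A B DU := by
  refine le_trans (Multiset.sum_nonneg fun _ hV => ?_) (sum_Vvol_le_Lk hDU hCAB)
  obtain ⟨R, hR, rfl⟩ := Multiset.mem_map.1 hV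
  exact hC R (hDU R hR).1 (hDU R hR).2

end KIncr

open KIncr

theorem stmt3_general (n k : ℕ) (A B : Pt n → ℝ) (hAI : MapsToI A) (hBI : MapsToI B)
    (hAB : ∀ x : Pt n, inCube x → A x ≤ B x) :
    (∃ C : Pt n → ℝ, MapsToI C ∧ KIncreasingOn k (cubeSet n) C ∧
        ∀ x : Pt n, inCube x → A x ≤ C x ∧ C x ≤ B x) ↔
    (∀ DU : Multiset (Box n), memRk k (cubeSet n) DU → 0 ≤ Lk k A B DU) :=
  ⟨fun ⟨_, _, hC, hCAB⟩ _ hDU => Lk_nonneg_of_kIncreasingOn hC hCAB hDU,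
    exists_kIncreasingOn_of_Lk_nonneg hAI hBI hAB⟩

/-- Theorem 3.1: avoidance of sure loss for standardized
functions under Condition S. -/
theorem stmt3 (n k : ℕ) (hn : 1 ≤ n) (hk1 : 1 ≤ k) (hkn : k ≤ n)
    (A B : Pt n → ℝ) (hA : Standardized A) (hB : Standardized B)
    (hAI : MapsToI A) (hBI : MapsToI B)
    (hAB : ∀ x : Pt n, inCube x → A x ≤ B x)
    (S : Set ℝ) (hS : S.Countable) (hSsub : S ⊆ Set.Icc (0:ℝ) 1)
    (hCondS : CondS A S ∨ CondS B S) :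
    (∃ C : Pt n → ℝ, MapsToI C ∧ KIncreasingOn k (cubeSet n) C ∧
        ∀ x : Pt n, inCube x → A x ≤ C x ∧ C x ≤ B x) ↔
    (∀ DU : Multiset (Box n), memRk k (cubeSet n) DU → 0 ≤ Lk k A B DU) :=
  stmt3_general n k A B hAI hBI hAB
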